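/- arXiv:2512.09856 — 2 statements merged into one kernel-verified Lean document; each statement's English description precedes it below -/
import Mathlib

section
/- Let {G^A_i}_{i=0}^{d^2-1} and {G^B_j}_{j=0}^{d^2-1} be orthogonal operator bases on ℂ^d (Tr(G† G') = d·δ, G_0 = I, G_i traceless and Hermitian for i ≥ 1), let C = [c_{ij}] be a real (d²−1)×(d²−1) matrix, and set S = ∑_{i,j=1}^{d^2-1} c_{ij} G^A_i ⊗ G^B_j (Kronecker product). Then for all unit vectors ψ_A, ψ_B ∈ ℂ^d, the product state ψ_A ⊗ ψ_B satisfies |⟨ψ_A ⊗ ψ_B, S (ψ_A ⊗ ψ_B)⟩| ≤ (d−1)·‖C‖, where ‖C‖ denotes the operator norm (largest singular value) of C. -/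
open Matrix
open Kronecker
open scoped BigOperators ComplexOrder

/-!
The correlation factorises as `aᵀ C b`, where `a i = ⟨ψ_A, G^A_{i+1} ψ_A⟩` and
`b j = ⟨ψ_B, G^B_{j+1} ψ_B⟩` are real (Bloch vectors) because the `G_i` are Hermitian.
The matrices `G_k / √d` are orthonormal for the Hilbert–Schmidt inner product, and
`⟨ψ, G_k ψ⟩ = Tr((ψψ†)† G_k)` has modulus `√d` times that of the coefficient of the
unit-norm matrix `ψψ†` along `G_k / √d`. Bessel's inequality therefore gives
`1 + ‖a‖² ≤ d`, the `1` coming from `G_0 = I`. Hence `|aᵀ C b| ≤ ‖a‖ ‖C‖ ‖b‖ ≤ (d - 1) ‖C‖`.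
-/

/-- The operator norm (largest singular value) of a real square matrix,
realized as the norm of the induced continuous linear map on Euclidean space. -/
noncomputable def opNorm {n : ℕ} (C : Matrix (Fin n) (Fin n) ℝ) : ℝ :=
  ‖(Matrix.toEuclideanCLM (𝕜 := ℝ) C :
      EuclideanSpace ℝ (Fin n) →L[ℝ] EuclideanSpace ℝ (Fin n))‖

theorem dotProduct_kronecker_mulVec {R l l' m m' : Type*} [CommSemiring R] [Fintype l]
    [Fintype l'] [Fintype m] [Fintype m'] (A : Matrix l l' R) (B : Matrix m m' R)
    (x : l → R) (y : m → R) (u : l' → R) (v : m' → R) :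
    (fun p : l × m => x p.1 * y p.2) ⬝ᵥ (A ⊗ₖ B) *ᵥ (fun p : l' × m' => u p.1 * v p.2) =
      (x ⬝ᵥ A *ᵥ u) * (y ⬝ᵥ B *ᵥ v) := by
  simp only [dotProduct, mulVec, kroneckerMap_apply, Fintype.sum_prod_type]
  rw [Finset.sum_mul_sum]
  simp only [Finset.mul_sum, Finset.sum_mul]
  refine Finset.sum_congr rfl fun i _ => Finset.sum_congr rfl fun j _ => ?_
  rw [Finset.sum_comm (s := Finset.univ (α := m'))]
  refine Finset.sum_congr rfl fun i' _ => Finset.sum_congr rfl fun j' _ => ?_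
  ring

section HilbertSchmidt

variable {ι m : Type*} [Fintype m]

theorem inner_toLp_vec_toLp_vec (A B : Matrix m m ℂ) :
    inner ℂ (WithLp.toLp 2 (vec A)) (WithLp.toLp 2 (vec B)) = (Aᴴ * B).trace := by
  rw [EuclideanSpace.inner_toLp_toLp, dotProduct_comm, star_vec_dotProduct_vec]

theorem norm_toLp_vec_vecMulVec_sq (u v : m → ℂ) :
    ‖WithLp.toLp 2 (vec (vecMulVec u v))‖ ^ 2 = (∑ i, ‖u i‖ ^ 2) * ∑ j, ‖v j‖ ^ 2 := by
  rw [EuclideanSpace.norm_sq_eq, Finset.sum_mul_sum, Fintype.sum_prod_type, Finset.sum_comm]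
  simp [vecMulVec_apply, mul_pow]

theorem sum_norm_sq_trace_conjTranspose_mul_le [DecidableEq ι] (G : ι → Matrix m m ℂ) {c : ℝ}
    (hc : 0 < c) (hG : ∀ k l, ((G k)ᴴ * G l).trace = if k = l then (c : ℂ) else 0)
    (s : Finset ι) (X : Matrix m m ℂ) :
    ∑ k ∈ s, ‖(Xᴴ * G k).trace‖ ^ 2 ≤ c * ‖WithLp.toLp 2 (vec X)‖ ^ 2 := by
  set e : ι → EuclideanSpace ℂ (m × m) := fun k => ((√c)⁻¹ : ℂ) • WithLp.toLp 2 (vec (G k))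
  have hsq : (√c : ℂ) * √c = c := by exact_mod_cast Real.mul_self_sqrt hc.le
  have he : Orthonormal ℂ e := by
    rw [orthonormal_iff_ite]
    intro k l
    simp only [e, inner_smul_left, inner_smul_right, inner_toLp_vec_toLp_vec, hG, map_inv₀,
      Complex.conj_ofReal]
    split_ifs
    · have hs : (√c : ℂ) ≠ 0 := by exact_mod_cast (Real.sqrt_pos.2 hc).ne'
      rw [← hsq]
      field_simp
    · simp
  have hbessel := he.sum_inner_products_le (WithLp.toLp 2 (vec X)) (s := s)
  have hcoef : ∀ k, ‖inner ℂ (e k) (WithLp.toLp 2 (vec X))‖ ^ 2 =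
      c⁻¹ * ‖(Xᴴ * G k).trace‖ ^ 2 := by
    intro k
    rw [norm_inner_symm]
    simp only [e, inner_smul_right, inner_toLp_vec_toLp_vec, norm_mul, mul_pow, norm_inv]
    simp [Real.sq_sqrt hc.le]
  rw [Finset.sum_congr rfl fun k _ => hcoef k, ← Finset.mul_sum] at hbessel
  rwa [inv_mul_le_iff₀ hc] at hbessel

theorem sum_norm_sq_star_dotProduct_mulVec_le [DecidableEq ι] (G : ι → Matrix m m ℂ) {c : ℝ}
    (hc : 0 < c) (hG : ∀ k l, ((G k)ᴴ * G l).trace = if k = l then (c : ℂ) else 0)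
    (s : Finset ι) (ψ : m → ℂ) :
    ∑ k ∈ s, ‖star ψ ⬝ᵥ G k *ᵥ ψ‖ ^ 2 ≤ c * (∑ i, ‖ψ i‖ ^ 2) ^ 2 := by
  have hbessel := sum_norm_sq_trace_conjTranspose_mul_le G hc hG s (vecMulVec ψ (star ψ))
  have htrace : ∀ k, ((vecMulVec ψ (star ψ))ᴴ * G k).trace = star ψ ⬝ᵥ G k *ᵥ ψ := by
    intro k
    rw [conjTranspose_vecMulVec, star_star, trace_mul_comm, mul_vecMulVec, trace_vecMulVec,
      dotProduct_comm]
  rw [Finset.sum_congr rfl fun k _ => by rw [htrace k], norm_toLp_vec_vecMulVec_sq] at hbessel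
  simpa only [Pi.star_apply, norm_star, ← sq] using hbessel

end HilbertSchmidt

theorem Matrix.IsHermitian.ofReal_re_star_dotProduct_mulVec {m : Type*} [Fintype m]
    {A : Matrix m m ℂ} (hA : A.IsHermitian) (x : m → ℂ) :
    ((star x ⬝ᵥ A *ᵥ x).re : ℂ) = star x ⬝ᵥ A *ᵥ x :=
  Complex.ext rfl (by simpa using (hA.im_star_dotProduct_mulVec_self x).symm)

section Bloch

variable {m : Type*} [Fintype m] {n : ℕ}

noncomputable def blochVector (G : Fin (n + 1) → Matrix m m ℂ) (ψ : m → ℂ) :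
    EuclideanSpace ℝ (Fin n) :=
  WithLp.toLp 2 fun i => (star ψ ⬝ᵥ G i.succ *ᵥ ψ).re

theorem norm_blochVector_sq_le [DecidableEq m] (G : Fin (n + 1) → Matrix m m ℂ) {c : ℝ}
    (hc : 0 < c) (hG : ∀ k l, ((G k)ᴴ * G l).trace = if k = l then (c : ℂ) else 0)
    (hG0 : G 0 = 1) (hherm : ∀ i : Fin n, (G i.succ).IsHermitian) (ψ : m → ℂ) (hψ : ∑ i, ‖ψ i‖ ^ 2 = 1) :
    ‖blochVector G ψ‖ ^ 2 ≤ c - 1 := by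
  have hbessel := sum_norm_sq_star_dotProduct_mulVec_le G hc hG Finset.univ ψ
  have hnorm : star ψ ⬝ᵥ ψ = 1 := by
    simp only [dotProduct, Pi.star_apply, RCLike.star_def, Complex.conj_mul']
    exact_mod_cast hψ
  rw [Fin.sum_univ_succ, hG0, one_mulVec, hnorm, hψ] at hbessel
  have hcoord : ∀ i, ‖blochVector G ψ i‖ = ‖star ψ ⬝ᵥ G i.succ *ᵥ ψ‖ := fun i => by
    rw [← (hherm i).ofReal_re_star_dotProduct_mulVec, Complex.norm_real]
    rfl
  rw [EuclideanSpace.norm_sq_eq]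
  simp only [hcoord]
  norm_num at hbessel
  linarith

theorem star_dotProduct_sum_kronecker_mulVec_eq_inner {m' : Type*} [Fintype m']
    (GA : Fin (n + 1) → Matrix m m ℂ) (GB : Fin (n + 1) → Matrix m' m' ℂ)
    (hGA : ∀ i : Fin n, (GA i.succ).IsHermitian) (hGB : ∀ i : Fin n, (GB i.succ).IsHermitian)
    (C : Matrix (Fin n) (Fin n) ℝ) (ψA : m → ℂ) (ψB : m' → ℂ) :
    star (fun p : m × m' => ψA p.1 * ψB p.2) ⬝ᵥ
        (∑ i : Fin n, ∑ j : Fin n, (C i j : ℂ) • (GA i.succ ⊗ₖ GB j.succ)) *ᵥ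
          (fun p : m × m' => ψA p.1 * ψB p.2) =
      (inner ℝ (blochVector GA ψA) (toEuclideanCLM (𝕜 := ℝ) C (blochVector GB ψB)) : ℝ) := by
  have hstar : star (fun p : m × m' => ψA p.1 * ψB p.2) = fun p => star ψA p.1 * star ψB p.2 :=
    funext fun p => star_mul' _ _
  have hA : ∀ i, star ψA ⬝ᵥ GA i.succ *ᵥ ψA = (blochVector GA ψA i : ℂ) := fun i =>
    ((hGA i).ofReal_re_star_dotProduct_mulVec ψA).symm
  have hB : ∀ j, star ψB ⬝ᵥ GB j.succ *ᵥ ψB = (blochVector GB ψB j : ℂ) := fun j =>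
    ((hGB j).ofReal_re_star_dotProduct_mulVec ψB).symm
  simp only [hstar, sum_mulVec, dotProduct_sum, smul_mulVec, dotProduct_smul,
    dotProduct_kronecker_mulVec, hA, hB]
  rw [inner_toEuclideanCLM]
  simp only [dotProduct, mulVec, Finset.mul_sum]
  push_cast
  refine Finset.sum_congr rfl fun i _ => Finset.sum_congr rfl fun j _ => ?_
  rw [smul_eq_mul]
  ring

end Bloch

theorem abs_inner_toEuclideanCLM_le_opNorm_mul {n : ℕ} (C : Matrix (Fin n) (Fin n) ℝ)
    (a b : EuclideanSpace ℝ (Fin n)) :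
    |inner ℝ a (toEuclideanCLM (𝕜 := ℝ) C b)| ≤ ‖a‖ * (opNorm C * ‖b‖) :=
  (abs_real_inner_le_norm _ _).trans
    (mul_le_mul_of_nonneg_left ((toEuclideanCLM (𝕜 := ℝ) C).le_opNorm b) (norm_nonneg a))

theorem stmt2_general (d n : ℕ)
    (GA GB : Fin (n + 1) → Matrix (Fin d) (Fin d) ℂ)
    (hGA : ∀ k l, ((GA k)ᴴ * GA l).trace = if k = l then (d : ℂ) else 0)
    (hGB : ∀ k l, ((GB k)ᴴ * GB l).trace = if k = l then (d : ℂ) else 0)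
    (hGA0 : GA 0 = 1) (hGB0 : GB 0 = 1)
    (hGAherm : ∀ i : Fin n, (GA i.succ).IsHermitian)
    (hGBherm : ∀ i : Fin n, (GB i.succ).IsHermitian)
    (C : Matrix (Fin n) (Fin n) ℝ)
    (S : Matrix (Fin d × Fin d) (Fin d × Fin d) ℂ)
    (hS : S = ∑ i : Fin n, ∑ j : Fin n, (C i j : ℂ) • (GA i.succ ⊗ₖ GB j.succ))
    (ψA ψB : Fin d → ℂ)
    (hψA : ∑ i, ‖ψA i‖ ^ 2 = 1) (hψB : ∑ i, ‖ψB i‖ ^ 2 = 1) :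
    ‖(star (fun p : Fin d × Fin d => ψA p.1 * ψB p.2)) ⬝ᵥ
        S.mulVec (fun p : Fin d × Fin d => ψA p.1 * ψB p.2)‖
      ≤ ((d : ℝ) - 1) * opNorm C := by
  have hd : (0 : ℝ) < d := by
    rcases Nat.eq_zero_or_pos d with rfl | hd
    · simp at hψA
    · exact_mod_cast hd
  have ha := norm_blochVector_sq_le GA hd (by simpa only [Complex.ofReal_natCast] using hGA)
    hGA0 hGAherm ψA hψA
  have hb := norm_blochVector_sq_le GB hd (by simpa only [Complex.ofReal_natCast] using hGB)
    hGB0 hGBherm ψB hψB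
  have hab : ‖blochVector GA ψA‖ * ‖blochVector GB ψB‖ ≤ d - 1 := by
    nlinarith [sq_nonneg (‖blochVector GA ψA‖ - ‖blochVector GB ψB‖)]
  rw [hS, star_dotProduct_sum_kronecker_mulVec_eq_inner GA GB hGAherm hGBherm, Complex.norm_real,
    Real.norm_eq_abs]
  calc _ ≤ ‖blochVector GA ψA‖ * (opNorm C * ‖blochVector GB ψB‖) :=
        abs_inner_toEuclideanCLM_le_opNorm_mul C _ _
    _ = opNorm C * (‖blochVector GA ψA‖ * ‖blochVector GB ψB‖) := by ring
    _ ≤ opNorm C * (d - 1) := mul_le_mul_of_nonneg_left hab (norm_nonneg _)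
    _ = _ := mul_comm _ _

/-- For orthogonal Hermitian operator bases `{G^A i}`, `{G^B j}` on `ℂ^d`
(`Tr(G† G') = d δ`, `G 0 = I`, `G i` traceless Hermitian for `i ≥ 1`), a real
`(d²−1)×(d²−1)` matrix `C`, and `S = ∑_{i,j≥1} c_{ij} G^A_i ⊗ G^B_j`, every product
state `ψ_A ⊗ ψ_B` of unit vectors satisfies `|⟨ψ_A⊗ψ_B, S(ψ_A⊗ψ_B)⟩| ≤ (d−1)‖C‖`. -/
theorem stmt2 (d n : ℕ) (hn : n + 1 = d ^ 2)
    (GA GB : Fin (n + 1) → Matrix (Fin d) (Fin d) ℂ)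
    (hGA : ∀ k l, ((GA k)ᴴ * GA l).trace = if k = l then (d : ℂ) else 0)
    (hGB : ∀ k l, ((GB k)ᴴ * GB l).trace = if k = l then (d : ℂ) else 0)
    (hGA0 : GA 0 = 1) (hGB0 : GB 0 = 1)
    (hGAtr : ∀ i : Fin n, (GA i.succ).trace = 0)
    (hGBtr : ∀ i : Fin n, (GB i.succ).trace = 0)
    (hGAherm : ∀ i : Fin n, (GA i.succ).IsHermitian)
    (hGBherm : ∀ i : Fin n, (GB i.succ).IsHermitian)
    (C : Matrix (Fin n) (Fin n) ℝ)
    (S : Matrix (Fin d × Fin d) (Fin d × Fin d) ℂ)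
    (hS : S = ∑ i : Fin n, ∑ j : Fin n, (C i j : ℂ) • (GA i.succ ⊗ₖ GB j.succ))
    (ψA ψB : Fin d → ℂ)
    (hψA : ∑ i, ‖ψA i‖ ^ 2 = 1) (hψB : ∑ i, ‖ψB i‖ ^ 2 = 1) :
    ‖(star (fun p : Fin d × Fin d => ψA p.1 * ψB p.2)) ⬝ᵥ
        S.mulVec (fun p : Fin d × Fin d => ψA p.1 * ψB p.2)‖
      ≤ ((d : ℝ) - 1) * opNorm C :=
  stmt2_general d n GA GB hGA hGB hGA0 hGB0 hGAherm hGBherm C S hS ψA ψB hψA hψB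
end

section
/- For real numbers α, β, γ, let C be the real 3×3 matrix with C₁₁ = α, C₁₃ = β, C₃₁ = γ, and all other entries zero (the coefficient matrix of the L-shaped observable S = α·X⊗X + β·X⊗Z + γ·Z⊗X). Then the operator norm of C satisfies ‖C‖² = (T + √(T² − 4β²γ²))/2, where T = α² + β² + γ². -/
/-!
For `x ∈ ℝ³`, `‖C x‖² = (α x₀ + β x₂)² + (γ x₀)²` is the quadratic form in `(x₀, x₂)` of the
Gram matrix `!![p, q; q, r] = !![α² + γ², αβ; αβ, β²]`, while `x₁` only enlarges `‖x‖`. Hence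
`‖C‖²` is the larger eigenvalue `λ₊ = (p + r + √((p - r)² + 4q²))/2` of that matrix, and
`(p - r)² + 4q² = T² - 4β²γ²`. The upper bound holds because
`(λ₊ - p) x² - 2q x y + (λ₊ - r) y²` has nonnegative diagonal and zero determinant.
-/

open Matrix
open scoped BigOperators

theorem ContinuousLinearMap.opNorm_sq_eq_of_sq_le_of_sq_eq {𝕜 E F : Type*}
    [NontriviallyNormedField 𝕜] [NormedAddCommGroup E] [NormedAddCommGroup F]
    [NormedSpace 𝕜 E] [NormedSpace 𝕜 F] (f : E →L[𝕜] F) {μ : ℝ}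
    (hle : ∀ x, ‖f x‖ ^ 2 ≤ μ * ‖x‖ ^ 2) {v : E} (hv : v ≠ 0)
    (heq : ‖f v‖ ^ 2 = μ * ‖v‖ ^ 2) : ‖f‖ ^ 2 = μ := by
  have hv₀ : 0 < ‖v‖ := norm_pos_iff.2 hv
  have hμ : 0 ≤ μ := by nlinarith [sq_nonneg ‖f v‖, pow_pos hv₀ 2]
  have hsqrt : ∀ x : E, √(μ * ‖x‖ ^ 2) = √μ * ‖x‖ := fun x => by
    rw [Real.sqrt_mul hμ, Real.sqrt_sq (norm_nonneg x)]
  have hbound : ∀ x, ‖f x‖ ≤ √μ * ‖x‖ := fun x => by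
    rw [← hsqrt]
    exact (Real.le_sqrt (norm_nonneg _) (by positivity)).2 (hle x)
  have hv_eq : ‖f v‖ = √μ * ‖v‖ := by rw [← hsqrt, ← heq, Real.sqrt_sq (norm_nonneg _)]
  have hnorm : ‖f‖ = √μ :=
    opNorm_eq_of_bounds (Real.sqrt_nonneg μ) hbound fun N _ hN =>
      le_of_mul_le_mul_right (hv_eq ▸ hN v) hv₀
  rw [hnorm, Real.sq_sqrt hμ]

theorem two_mul_mul_le_of_mul_eq_sq {A B c : ℝ} (hA : 0 ≤ A) (hB : 0 ≤ B) (h : A * B = c ^ 2)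
    (x y : ℝ) : 2 * c * x * y ≤ A * x ^ 2 + B * y ^ 2 := by
  rcases hA.eq_or_lt with rfl | hA
  · obtain rfl : c = 0 := by simpa using h.symm
    nlinarith [mul_nonneg hB (sq_nonneg y)]
  · nlinarith [sq_nonneg (A * x - c * y)]

/-- The larger eigenvalue of the symmetric matrix `!![p, q; q, r]`. -/
noncomputable def maxEigenvalueSymm2 (p q r : ℝ) : ℝ :=
  (p + r + √((p - r) ^ 2 + 4 * q ^ 2)) / 2

section maxEigenvalueSymm2

variable (p q r : ℝ)

local notation "λ₊" => maxEigenvalueSymm2 p q r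

theorem sub_mul_sub_maxEigenvalueSymm2 : (λ₊ - p) * (λ₊ - r) = q ^ 2 := by
  have h := Real.sq_sqrt (by positivity : (0 : ℝ) ≤ (p - r) ^ 2 + 4 * q ^ 2)
  unfold maxEigenvalueSymm2
  linear_combination h / 4

theorem le_maxEigenvalueSymm2_left : p ≤ λ₊ := by
  have := Real.abs_le_sqrt (by nlinarith : (r - p) ^ 2 ≤ (p - r) ^ 2 + 4 * q ^ 2)
  unfold maxEigenvalueSymm2
  linarith [le_abs_self (r - p), neg_abs_le (r - p)]

theorem le_maxEigenvalueSymm2_right : r ≤ λ₊ := by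
  have := Real.abs_le_sqrt (by nlinarith : (p - r) ^ 2 ≤ (p - r) ^ 2 + 4 * q ^ 2)
  unfold maxEigenvalueSymm2
  linarith [neg_abs_le (p - r)]

theorem quadForm_le_maxEigenvalueSymm2 (x y : ℝ) :
    p * x ^ 2 + 2 * q * x * y + r * y ^ 2 ≤ λ₊ * (x ^ 2 + y ^ 2) := by
  have := two_mul_mul_le_of_mul_eq_sq (sub_nonneg.2 (le_maxEigenvalueSymm2_left p q r))
    (sub_nonneg.2 (le_maxEigenvalueSymm2_right p q r)) (sub_mul_sub_maxEigenvalueSymm2 p q r) x y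
  linarith

theorem exists_quadForm_eq_maxEigenvalueSymm2 :
    ∃ x y : ℝ, (x ≠ 0 ∨ y ≠ 0) ∧
      p * x ^ 2 + 2 * q * x * y + r * y ^ 2 = λ₊ * (x ^ 2 + y ^ 2) := by
  have key := sub_mul_sub_maxEigenvalueSymm2 p q r
  by_cases h : λ₊ - r = 0 ∧ q = 0
  · refine ⟨0, 1, Or.inr one_ne_zero, ?_⟩
    linear_combination -h.1
  · -- the eigenvector `(λ₊ - r, q)`
    refine ⟨λ₊ - r, q, not_and_or.1 h, ?_⟩
    linear_combination (r - λ₊) * key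

end maxEigenvalueSymm2

theorem norm_sq_toEuclideanCLM_lShape (α β γ : ℝ) (x : EuclideanSpace ℝ (Fin 3)) :
    ‖Matrix.toEuclideanCLM (𝕜 := ℝ) !![α, 0, β; 0, 0, 0; γ, 0, 0] x‖ ^ 2
      = (α ^ 2 + γ ^ 2) * x 0 ^ 2 + 2 * (α * β) * x 0 * x 2 + β ^ 2 * x 2 ^ 2 := by
  simp only [EuclideanSpace.norm_sq_eq, ofLp_toEuclideanCLM, mulVec, dotProduct, of_apply,
    cons_val', cons_val_fin_one, Fin.sum_univ_three, Fin.isValue, cons_val_zero, cons_val_one,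
    cons_val, Real.norm_eq_abs, sq_abs, zero_mul, add_zero, ne_eq, OfNat.ofNat_ne_zero,
    not_false_eq_true, zero_pow]
  ring

theorem EuclideanSpace.norm_sq_fin_three (x : EuclideanSpace ℝ (Fin 3)) :
    ‖x‖ ^ 2 = x 0 ^ 2 + x 1 ^ 2 + x 2 ^ 2 := by
  simp [EuclideanSpace.norm_sq_eq, Fin.sum_univ_three]

/-- For the L-shaped coefficient matrix `C` with `C₁₁ = α`,
`C₁₃ = β`, `C₃₁ = γ` and all other entries zero, the operator norm satisfies
`‖C‖² = (T + √(T² − 4β²γ²))/2`, where `T = α² + β² + γ²`. -/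
theorem stmt11 (α β γ : ℝ) :
    (opNorm !![α, 0, β; 0, 0, 0; γ, 0, 0]) ^ 2
      = ((α ^ 2 + β ^ 2 + γ ^ 2)
          + Real.sqrt ((α ^ 2 + β ^ 2 + γ ^ 2) ^ 2 - 4 * β ^ 2 * γ ^ 2)) / 2 := by
  have hlam : maxEigenvalueSymm2 (α ^ 2 + γ ^ 2) (α * β) (β ^ 2) = ((α ^ 2 + β ^ 2 + γ ^ 2)
      + Real.sqrt ((α ^ 2 + β ^ 2 + γ ^ 2) ^ 2 - 4 * β ^ 2 * γ ^ 2)) / 2 := by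
    rw [maxEigenvalueSymm2]
    ring_nf
  rw [← hlam]
  set lam := maxEigenvalueSymm2 (α ^ 2 + γ ^ 2) (α * β) (β ^ 2)
  have hlam₀ : 0 ≤ lam := (sq_nonneg β).trans (le_maxEigenvalueSymm2_right _ _ _)
  obtain ⟨x, y, hxy, heq⟩ := exists_quadForm_eq_maxEigenvalueSymm2 (α ^ 2 + γ ^ 2) (α * β) (β ^ 2)
  refine ContinuousLinearMap.opNorm_sq_eq_of_sq_le_of_sq_eq _ (fun v => ?_) (v := !₂[x, 0, y])
    ?_ ?_
  · calc _ = _ := norm_sq_toEuclideanCLM_lShape α β γ v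
      _ ≤ lam * (v 0 ^ 2 + v 2 ^ 2) := quadForm_le_maxEigenvalueSymm2 _ _ _ _ _
      _ ≤ lam * ‖v‖ ^ 2 := by
        rw [EuclideanSpace.norm_sq_fin_three]
        gcongr
        linarith [sq_nonneg (v 1)]
  · intro h
    rcases hxy with hx | hy
    · exact hx (by simpa using congrArg (· 0) h)
    · exact hy (by simpa using congrArg (· 2) h)
  · rw [norm_sq_toEuclideanCLM_lShape, EuclideanSpace.norm_sq_fin_three]
    simpa using heq
end
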